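/- arXiv:1712.04630 — 2 statements merged into one kernel-verified Lean document; each statement's English description precedes it below -/
import Mathlib

section
/- Generalized Taylor expansion of the generalized hypergeometric function (Section 4, Example 3): Let p ≤ q be natural numbers, let a_1, …, a_p be real numbers and b_1, …, b_q be positive real numbers, let β > 0, m ∈ ℕ and z > 0. Then there exists ξ ∈ (0,z) such that ₚF_q(a_1,…,a_p; b_1,…,b_q; z^β) = Σ_{j=0}^{m} ((a_1)_j⋯(a_p)_j / ((b_1)_j⋯(b_q)_j · j!)) · z^{βj} + ((a_1)_{m+1}⋯(a_p)_{m+1} / ((b_1)_{m+1}⋯(b_q)_{m+1} · (m+1)!)) · z^{β(m+1)} · ₚF_q(a_1+m+1,…,a_p+m+1; b_1+m+1,…,b_q+m+1; ξ^β). -/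
/-- The Pochhammer symbol `(ν)_k = ν (ν+1) ⋯ (ν+k-1)`, with `(ν)_0 = 1`. -/
noncomputable def poch (ν : ℝ) (k : ℕ) : ℝ := ∏ i ∈ Finset.range k, (ν + (i : ℝ))

/-- The generalized hypergeometric function
`ₚF_q(a₁,…,a_p; b₁,…,b_q; z) = Σ_{k=0}^∞ ((a₁)_k ⋯ (a_p)_k / ((b₁)_k ⋯ (b_q)_k)) z^k / k!`. -/
noncomputable def hypergeom {p q : ℕ} (A : Fin p → ℝ) (B : Fin q → ℝ) (z : ℝ) : ℝ :=
  ∑' k : ℕ, (∏ i, poch (A i) k) / ((∏ i, poch (B i) k) * (k.factorial : ℝ)) * z ^ k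

/-!
Differentiating termwise, `F(a; b; t)' = (∏ aᵢ / ∏ bⱼ) F(a + 1; b + 1; t)`, hence
`F⁽ⁿ⁾(a; b; t) = (∏ (aᵢ)ₙ / ∏ (bⱼ)ₙ) F(a + n; b + n; t)` and the Taylor coefficients of `F` at `0`
are its series coefficients. Taylor's theorem with Lagrange remainder on `[0, z^β]` gives the
expansion at an intermediate point `c`, and `ξ = c^(1/β)`. Termwise differentiation is legitimate
because for `p ≤ q` the series is entire: the ratio of consecutive coefficients is a rational
function of `k` of negative degree.
-/

open Finset Filter Topology
open scoped ContDiff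

lemma poch_zero (ν : ℝ) : poch ν 0 = 1 := by simp [poch]

lemma poch_succ (ν : ℝ) (k : ℕ) : poch ν (k + 1) = poch ν k * (ν + k) :=
  prod_range_succ _ k

lemma poch_succ' (ν : ℝ) (k : ℕ) : poch ν (k + 1) = ν * poch (ν + 1) k := by
  rw [poch, prod_range_succ', mul_comm, Nat.cast_zero, add_zero, poch]
  congr 1
  exact prod_congr rfl fun i _ => by push_cast; ring

lemma summable_mul_pow_of_ratio_tendsto_zero {a ρ : ℕ → ℝ} (ha : ∀ k, a (k + 1) = a k * ρ k)
    (hρ : Tendsto ρ atTop (𝓝 0)) (r : ℝ) : Summable fun k => a k * r ^ k := by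
  have hsmall : ∀ᶠ k in atTop, ‖ρ k * r‖ ≤ 1 / 2 := by
    have : Tendsto (fun k => ρ k * r) atTop (𝓝 0) := by simpa using hρ.mul_const r
    exact this.norm.eventually (ge_mem_nhds (by norm_num))
  refine summable_of_ratio_norm_eventually_le (r := 1 / 2) (by norm_num) ?_
  filter_upwards [hsmall] with k hk
  calc ‖a (k + 1) * r ^ (k + 1)‖ = ‖ρ k * r‖ * ‖a k * r ^ k‖ := by
        rw [← norm_mul, ha, pow_succ]; congr 1; ring
    _ ≤ 1 / 2 * ‖a k * r ^ k‖ := by gcongr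

lemma hasDerivAt_tsum_mul_pow {a : ℕ → ℝ} (ha : ∀ r, Summable fun k => a k * r ^ k) (t : ℝ) :
    HasDerivAt (fun x => ∑' k, a k * x ^ k) (∑' k, (k + 1) * a (k + 1) * t ^ k) t := by
  set R := |t| + 1
  have hR : 1 ≤ R := le_add_of_nonneg_left (abs_nonneg t)
  have ht : t ∈ Metric.ball (0 : ℝ) R := by simp [R]
  -- `k ≤ 2 ^ k` turns summability at radius `2R` into a bound for the differentiated series
  have hu : Summable fun k => |a k| * (2 * R) ^ k := by
    simpa [abs_mul, abs_of_pos (by positivity : (0 : ℝ) < 2 * R)] using (ha (2 * R)).abs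
  have hbound : ∀ k, ∀ y ∈ Metric.ball (0 : ℝ) R,
      ‖a k * (k * y ^ (k - 1))‖ ≤ |a k| * (2 * R) ^ k := by
    intro k y hy
    have hy : |y| ≤ R := by simpa using (Metric.mem_ball.mp hy).le
    have hk : (k : ℝ) ≤ 2 ^ k := by exact_mod_cast (Nat.lt_two_pow_self).le
    calc ‖a k * (k * y ^ (k - 1))‖ = |a k| * (k * |y| ^ (k - 1)) := by simp
      _ ≤ |a k| * (2 ^ k * R ^ k) := by
          gcongr
          exact (pow_le_pow_left₀ (abs_nonneg y) hy _).trans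
            (pow_le_pow_right₀ hR (Nat.sub_le k 1))
      _ = |a k| * (2 * R) ^ k := by rw [mul_pow]
  have hderiv := hasDerivAt_tsum_of_isPreconnected hu Metric.isOpen_ball
    (convex_ball (0 : ℝ) R).isPreconnected (fun k y _ => (hasDerivAt_pow k y).const_mul (a k))
    hbound ht (ha t) ht
  have hsum : Summable fun k => a k * (k * t ^ (k - 1)) :=
    .of_norm_bounded hu fun k => hbound k t ht
  refine hderiv.congr_deriv ?_
  rw [hsum.tsum_eq_zero_add]
  simp only [Nat.cast_zero, zero_mul, mul_zero, zero_add, Nat.cast_succ, Nat.add_sub_cancel]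
  exact tsum_congr fun k => by ring

lemma exists_eq_taylor_sum_add_lagrange_remainder {f : ℝ → ℝ} {n : ℕ}
    (hf : ContDiff ℝ (n + 1) f) {x₀ x : ℝ} (hx : x₀ < x) :
    ∃ c ∈ Set.Ioo x₀ x, f x =
      ∑ j ∈ range (n + 1), iteratedDeriv j f x₀ / j.factorial * (x - x₀) ^ j +
        iteratedDeriv (n + 1) f c * (x - x₀) ^ (n + 1) / (n + 1).factorial := by
  obtain ⟨c, hc, hrem⟩ := taylor_mean_remainder_lagrange_iteratedDeriv hx.ne hf.contDiffOn
  rw [Set.uIoo_of_le hx.le] at hc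
  have htaylor : taylorWithinEval f n (Set.uIcc x₀ x) x₀ x =
      ∑ j ∈ range (n + 1), iteratedDeriv j f x₀ / j.factorial * (x - x₀) ^ j := by
    rw [taylor_within_apply, Set.uIcc_of_le hx.le]
    refine sum_congr rfl fun j hj => ?_
    have hfj : ContDiffAt ℝ j f x₀ :=
      hf.contDiffAt.of_le (by exact_mod_cast (mem_range.1 hj).le)
    rw [iteratedDerivWithin_eq_iteratedDeriv (uniqueDiffOn_Icc hx) hfj (Set.left_mem_Icc.2 hx.le),
      smul_eq_mul]
    ring
  exact ⟨c, hc, by rw [← htaylor, ← hrem]; ring⟩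

section Hypergeom

variable {p q : ℕ} (A : Fin p → ℝ) (B : Fin q → ℝ)

noncomputable def hypergeomCoeff (k : ℕ) : ℝ :=
  (∏ i, poch (A i) k) / ((∏ i, poch (B i) k) * (k.factorial : ℝ))

lemma hypergeom_eq_tsum (z : ℝ) : hypergeom A B z = ∑' k, hypergeomCoeff A B k * z ^ k := rfl

lemma hypergeomCoeff_zero : hypergeomCoeff A B 0 = 1 := by
  simp [hypergeomCoeff, poch_zero]

lemma hypergeom_zero : hypergeom A B 0 = 1 := by
  rw [hypergeom_eq_tsum, tsum_eq_single 0 fun k hk => by rw [zero_pow hk, mul_zero],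
    hypergeomCoeff_zero, pow_zero, mul_one]

lemma hypergeomCoeff_succ (k : ℕ) :
    hypergeomCoeff A B (k + 1) =
      hypergeomCoeff A B k * ((∏ i, (A i + k)) / ((∏ i, (B i + k)) * (k + 1))) := by
  simp only [hypergeomCoeff, poch_succ, prod_mul_distrib, Nat.factorial_succ, Nat.cast_mul,
    Nat.cast_succ, div_mul_div_comm]
  congr 1
  ring

lemma succ_mul_hypergeomCoeff_succ (k : ℕ) :
    (k + 1) * hypergeomCoeff A B (k + 1) =
      (∏ i, A i) / (∏ i, B i) * hypergeomCoeff (fun i => A i + 1) (fun i => B i + 1) k := by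
  simp only [hypergeomCoeff, poch_succ', prod_mul_distrib, Nat.factorial_succ, Nat.cast_mul,
    Nat.cast_succ, div_mul_div_comm]
  field_simp

open Polynomial in
lemma tendsto_hypergeomCoeff_ratio (hpq : p ≤ q) :
    Tendsto (fun k : ℕ => (∏ i, (A i + k)) / ((∏ i, (B i + k)) * (k + 1))) atTop (𝓝 0) := by
  have hdeg : (∏ i, (X + C (A i))).degree < ((∏ i, (X + C (B i))) * (X + C 1)).degree := by
    simp only [degree_mul, degree_prod, degree_X_add_C, sum_const, card_univ, Fintype.card_fin]
    rw [nsmul_one, nsmul_one]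
    exact_mod_cast Nat.lt_succ_of_le hpq
  have := (div_tendsto_atTop_zero_of_degree_lt _ _ hdeg).comp tendsto_natCast_atTop_atTop
  simpa [eval_prod, Function.comp_def, add_comm] using this

lemma summable_hypergeom (hpq : p ≤ q) (z : ℝ) :
    Summable fun k => hypergeomCoeff A B k * z ^ k :=
  summable_mul_pow_of_ratio_tendsto_zero (hypergeomCoeff_succ A B)
    (tendsto_hypergeomCoeff_ratio A B hpq) z

lemma hasDerivAt_hypergeom (hpq : p ≤ q) (t : ℝ) :
    HasDerivAt (hypergeom A B)
      ((∏ i, A i) / (∏ i, B i) * hypergeom (fun i => A i + 1) (fun i => B i + 1) t) t := by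
  refine (hasDerivAt_tsum_mul_pow (summable_hypergeom A B hpq) t).congr_deriv ?_
  simp only [succ_mul_hypergeomCoeff_succ, mul_assoc, tsum_mul_left, hypergeom_eq_tsum]

lemma iteratedDeriv_hypergeom (hpq : p ≤ q) (n : ℕ) :
    iteratedDeriv n (hypergeom A B) = fun t =>
      (∏ i, poch (A i) n) / (∏ i, poch (B i) n) *
        hypergeom (fun i => A i + n) (fun i => B i + n) t := by
  induction n with
  | zero => simp [poch_zero]
  | succ n ih =>
    ext t
    rw [iteratedDeriv_succ, ih]
    have := ((hasDerivAt_hypergeom (fun i => A i + n) (fun i => B i + n) hpq t).const_mul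
      ((∏ i, poch (A i) n) / (∏ i, poch (B i) n))).deriv
    rw [this]
    simp only [poch_succ, prod_mul_distrib, Nat.cast_succ, add_assoc]
    ring

lemma contDiff_hypergeom (hpq : p ≤ q) : ContDiff ℝ ∞ (hypergeom A B) :=
  contDiff_of_differentiable_iteratedDeriv fun n _ => by
    rw [iteratedDeriv_hypergeom A B hpq]
    exact fun t => ((hasDerivAt_hypergeom _ _ hpq t).differentiableAt).const_mul _

end Hypergeom

lemma exists_hypergeom_eq_sum_add_remainder {p q : ℕ} (hpq : p ≤ q) (A : Fin p → ℝ)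
    (B : Fin q → ℝ) (m : ℕ) {x : ℝ} (hx : 0 < x) :
    ∃ c ∈ Set.Ioo 0 x, hypergeom A B x =
      ∑ j ∈ range (m + 1), hypergeomCoeff A B j * x ^ j +
        hypergeomCoeff A B (m + 1) * x ^ (m + 1) *
          hypergeom (fun i => A i + m + 1) (fun i => B i + m + 1) c := by
  obtain ⟨c, hc, h⟩ := exists_eq_taylor_sum_add_lagrange_remainder
    (by exact_mod_cast contDiff_infty.1 (contDiff_hypergeom A B hpq) (m + 1)) hx
  refine ⟨c, hc, h.trans ?_⟩
  simp only [iteratedDeriv_hypergeom A B hpq, hypergeom_zero, hypergeomCoeff, sub_zero,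
    Nat.cast_succ, add_assoc]
  congr 1
  · exact sum_congr rfl fun j _ => by ring
  · ring

theorem hypergeom_taylor_general {p q : ℕ} (hpq : p ≤ q) (A : Fin p → ℝ) (B : Fin q → ℝ)
    (β : ℝ) (hβ : 0 < β) (m : ℕ) (z : ℝ) (hz : 0 < z) :
    ∃ ξ ∈ Set.Ioo 0 z,
      hypergeom A B (z ^ β)
        = (∑ j ∈ Finset.range (m + 1),
            (∏ i, poch (A i) j) / ((∏ i, poch (B i) j) * (j.factorial : ℝ)) *
              z ^ (β * (j : ℝ)))
          + (∏ i, poch (A i) (m + 1)) /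
              ((∏ i, poch (B i) (m + 1)) * (((m + 1).factorial : ℕ) : ℝ)) *
              z ^ (β * ((m : ℝ) + 1)) *
              hypergeom (fun i => A i + (m : ℝ) + 1) (fun i => B i + (m : ℝ) + 1) (ξ ^ β) := by
  obtain ⟨c, ⟨hc0, hcz⟩, h⟩ :=
    exists_hypergeom_eq_sum_add_remainder hpq A B m (Real.rpow_pos_of_pos hz β)
  have hzpow : ∀ j : ℕ, z ^ (β * j) = (z ^ β) ^ j := fun j => by
    rw [Real.rpow_mul hz.le, Real.rpow_natCast]
  refine ⟨c ^ β⁻¹, ⟨Real.rpow_pos_of_pos hc0 _, ?_⟩, ?_⟩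
  · calc c ^ β⁻¹ < (z ^ β) ^ β⁻¹ := Real.rpow_lt_rpow hc0.le hcz (inv_pos.2 hβ)
      _ = z := Real.rpow_rpow_inv hz.le hβ.ne'
  · rw [Real.rpow_inv_rpow hc0.le hβ.ne', ← Nat.cast_succ]
    simpa only [hzpow, hypergeomCoeff] using h

/-- Generalized Taylor expansion of the generalized hypergeometric function
(Section 4, Example 3). -/
theorem hypergeom_taylor {p q : ℕ} (hpq : p ≤ q) (A : Fin p → ℝ) (B : Fin q → ℝ)
    (hB : ∀ i, 0 < B i) (β : ℝ) (hβ : 0 < β) (m : ℕ) (z : ℝ) (hz : 0 < z) :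
    ∃ ξ ∈ Set.Ioo 0 z,
      hypergeom A B (z ^ β)
        = (∑ j ∈ Finset.range (m + 1),
            (∏ i, poch (A i) j) / ((∏ i, poch (B i) j) * (j.factorial : ℝ)) *
              z ^ (β * (j : ℝ)))
          + (∏ i, poch (A i) (m + 1)) /
              ((∏ i, poch (B i) (m + 1)) * (((m + 1).factorial : ℕ) : ℝ)) *
              z ^ (β * ((m : ℝ) + 1)) *
              hypergeom (fun i => A i + (m : ℝ) + 1) (fun i => B i + (m : ℝ) + 1) (ξ ^ β) :=
  hypergeom_taylor_general hpq A B β hβ m z hz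
end

section
/- Generalized Caputo derivative of power functions (Proposition 5.1, first identity): Let ρ > 0, a ≥ 0, α > 0 with α ∉ ℕ, set n = ⌊α⌋ + 1, and let β be a real number with β > n − 1. Then for every x > a: C^{α,ρ}_{a+}[ t ↦ ((t^ρ − a^ρ)/ρ)^β ](x) = (Γ(1+β)/Γ(1+β−α)) · ((x^ρ − a^ρ)/ρ)^{β−α}. -/
/-!
With `g t = (t^ρ - a^ρ)/ρ` one has `g' t = t^(ρ-1)`, so `γ = t^(1-ρ) d/dt` acts on `h ∘ g` as `h' ∘ g`,
and `γⁿ (g^β) = β(β-1)⋯(β-n+1) g^(β-n)`. Since `x^ρ - τ^ρ = ρ (g x - g τ)` and `τ^(ρ-1) dτ = dg`,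
the substitution `u = g τ` turns the defining integral into the Beta integral
`∫₀^X u^(β-n) (X-u)^(n-α-1) du = X^(β-α) B(β-n+1, n-α)`; the powers of `ρ` cancel.
-/

/-- The operator `γ = x^(1-ρ) d/dx`. -/
noncomputable def gammaOp (ρ : ℝ) (g : ℝ → ℝ) : ℝ → ℝ := fun x => x ^ (1 - ρ) * deriv g x

/-- The left generalized (Katugampola) Caputo-type fractional derivative of
non-integer order `α > 0` with `n = ⌊α⌋ + 1`, parameter `ρ > 0` and base point `a`:
`(C^{α,ρ}_{a+} f)(x) = (ρ^(α-n+1)/Γ(n-α)) ∫_a^x τ^(ρ-1) (γⁿ f)(τ) (x^ρ-τ^ρ)^(n-α-1) dτ`. -/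
noncomputable def genCaputoHigh (ρ α a : ℝ) (n : ℕ) (f : ℝ → ℝ) : ℝ → ℝ := fun x =>
  ρ ^ (α - (n : ℝ) + 1) / Real.Gamma ((n : ℝ) - α) *
    ∫ τ in a..x, τ ^ (ρ - 1) * (gammaOp ρ)^[n] f τ * (x ^ ρ - τ ^ ρ) ^ ((n : ℝ) - α - 1)

open Set MeasureTheory

theorem Real.descPochhammer_eval_mul_Gamma {β : ℝ} {k : ℕ} (hk : (k : ℝ) < β + 1) :
    (descPochhammer ℝ k).eval β * Real.Gamma (β + 1 - k) = Real.Gamma (β + 1) := by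
  induction k with
  | zero => simp
  | succ k ih =>
    push_cast at hk ⊢
    rw [descPochhammer_succ_eval, ← ih (by linarith), mul_assoc, sub_add_eq_sub_sub,
      show β + 1 - k = β - k + 1 by ring, Real.Gamma_add_one (by linarith)]
    ring_nf

theorem integral_rpow_mul_sub_rpow {p q X : ℝ} (hp : -1 < p) (hq : -1 < q) (hX : 0 < X) :
    ∫ u in 0..X, u ^ p * (X - u) ^ q
      = X ^ (p + q + 1) * (Real.Gamma (p + 1) * Real.Gamma (q + 1) / Real.Gamma (p + q + 2)) := by
  have hbeta := Complex.betaIntegral_scaled (p + 1 : ℝ) (q + 1 : ℝ) hX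
  rw [Complex.betaIntegral_eq_Gamma_mul_div _ _ (by simp; linarith) (by simp; linarith)] at hbeta
  apply Complex.ofReal_injective
  rw [← intervalIntegral.integral_ofReal]
  convert hbeta using 1
  · refine intervalIntegral.integral_congr fun u hu => ?_
    rw [uIcc_of_le hX.le] at hu
    push_cast
    rw [Complex.ofReal_cpow hu.1, Complex.ofReal_cpow (sub_nonneg.2 hu.2)]
    push_cast
    ring_nf
  · rw [Complex.ofReal_mul, Complex.ofReal_cpow hX.le, Complex.ofReal_div, Complex.ofReal_mul,
      ← Complex.Gamma_ofReal, ← Complex.Gamma_ofReal, ← Complex.Gamma_ofReal]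
    push_cast
    ring_nf

section RpowSubDiv

variable {ρ a : ℝ}

theorem rpow_sub_div_pos {t : ℝ} (hρ : 0 < ρ) (ha : 0 ≤ a) (ht : a < t) :
    0 < (t ^ ρ - a ^ ρ) / ρ :=
  div_pos (sub_pos.2 (Real.rpow_lt_rpow ha ht hρ)) hρ

theorem hasDerivAt_rpow_sub_div {t : ℝ} (hρ : ρ ≠ 0) (ht : 0 < t) :
    HasDerivAt (fun s => (s ^ ρ - a ^ ρ) / ρ) (t ^ (ρ - 1)) t := by
  simpa only [mul_div_cancel_left₀ _ hρ] using
    ((Real.hasDerivAt_rpow_const (p := ρ) (Or.inl ht.ne')).sub_const (a ^ ρ)).div_const ρ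

theorem gammaOp_comp_rpow_sub_div {t : ℝ} (hρ : ρ ≠ 0) (ht : 0 < t) {h : ℝ → ℝ}
    (hh : DifferentiableAt ℝ h ((t ^ ρ - a ^ ρ) / ρ)) :
    gammaOp ρ (fun s => h ((s ^ ρ - a ^ ρ) / ρ)) t = deriv h ((t ^ ρ - a ^ ρ) / ρ) := by
  have hd : HasDerivAt (fun s => h ((s ^ ρ - a ^ ρ) / ρ)) _ t :=
    hh.hasDerivAt.comp t (hasDerivAt_rpow_sub_div hρ ht)
  rw [gammaOp, hd.deriv, mul_left_comm, ← Real.rpow_add ht]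
  simp

theorem iterate_gammaOp_comp_rpow_sub_div (hρ : 0 < ρ) (ha : 0 ≤ a) {h : ℝ → ℝ} {k : ℕ}
    (hh : ∀ j < k, ∀ u > 0, DifferentiableAt ℝ (deriv^[j] h) u) {t : ℝ} (ht : a < t) :
    (gammaOp ρ)^[k] (fun s => h ((s ^ ρ - a ^ ρ) / ρ)) t = deriv^[k] h ((t ^ ρ - a ^ ρ) / ρ) := by
  induction k generalizing t with
  | zero => rfl
  | succ k ih =>
    have hev : (gammaOp ρ)^[k] (fun s => h ((s ^ ρ - a ^ ρ) / ρ))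
        =ᶠ[nhds t] fun s => deriv^[k] h ((s ^ ρ - a ^ ρ) / ρ) :=
      Filter.eventually_of_mem (isOpen_Ioi.mem_nhds ht)
        fun s hs => ih (fun j hj => hh j (by omega)) hs
    rw [Function.iterate_succ_apply', Function.iterate_succ_apply', gammaOp, hev.deriv_eq,
      ← gammaOp, gammaOp_comp_rpow_sub_div hρ.ne' (ha.trans_lt ht)
        (hh k k.lt_succ_self _ (rpow_sub_div_pos hρ ha ht))]

theorem iterate_gammaOp_rpow_sub_div {β : ℝ} (hρ : 0 < ρ) (ha : 0 ≤ a) (k : ℕ) {t : ℝ}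
    (ht : a < t) :
    (gammaOp ρ)^[k] (fun s => ((s ^ ρ - a ^ ρ) / ρ) ^ β) t
      = (descPochhammer ℝ k).eval β * ((t ^ ρ - a ^ ρ) / ρ) ^ (β - k) := by
  rw [iterate_gammaOp_comp_rpow_sub_div (h := (· ^ β)) hρ ha (fun j _ u hu => ?_) ht,
    Real.iter_deriv_rpow_const]
  rw [funext (Real.iter_deriv_rpow_const β · j)]
  exact (Real.differentiableAt_rpow_const_of_ne _ hu.ne').const_mul _

theorem integral_rpow_sub_one_mul_comp_rpow_sub_div {x : ℝ} (hρ : 0 < ρ) (ha : 0 ≤ a)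
    (hax : a ≤ x) (F : ℝ → ℝ) :
    ∫ τ in a..x, τ ^ (ρ - 1) * F ((τ ^ ρ - a ^ ρ) / ρ) = ∫ u in 0..(x ^ ρ - a ^ ρ) / ρ, F u := by
  have hcont : ContinuousOn (fun s : ℝ => (s ^ ρ - a ^ ρ) / ρ) (Icc a x) :=
    (((Real.continuous_rpow_const hρ.le).sub continuous_const).div_const ρ).continuousOn
  have hcov := integral_Icc_deriv_smul_of_deriv_nonneg (g := F) hcont
    (fun τ hτ => hasDerivAt_rpow_sub_div hρ.ne' (ha.trans_lt hτ.1))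
    (fun τ hτ => (Real.rpow_pos_of_pos (ha.trans_lt hτ.1) _).le) hax
  simp only [sub_self, zero_div, smul_eq_mul] at hcov
  rw [intervalIntegral.integral_of_le hax, intervalIntegral.integral_of_le
    (div_nonneg (sub_nonneg.2 (Real.rpow_le_rpow ha hax hρ.le)) hρ.le),
    ← integral_Icc_eq_integral_Ioc, ← integral_Icc_eq_integral_Ioc, hcov]

theorem integral_rpow_sub_one_mul_rpow_sub_div_mul_rpow_sub {x p q : ℝ} (hρ : 0 < ρ)
    (ha : 0 ≤ a) (hax : a < x) (hp : -1 < p) (hq : -1 < q) :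
    ∫ τ in a..x, τ ^ (ρ - 1) * ((τ ^ ρ - a ^ ρ) / ρ) ^ p * (x ^ ρ - τ ^ ρ) ^ q
      = ρ ^ q * (((x ^ ρ - a ^ ρ) / ρ) ^ (p + q + 1)
          * (Real.Gamma (p + 1) * Real.Gamma (q + 1) / Real.Gamma (p + q + 2))) := by
  have hX := rpow_sub_div_pos hρ ha hax
  generalize hXdef : (x ^ ρ - a ^ ρ) / ρ = X at hX ⊢
  have hkernel : ∀ τ ∈ Ioc a x, τ ^ (ρ - 1) * ((τ ^ ρ - a ^ ρ) / ρ) ^ p * (x ^ ρ - τ ^ ρ) ^ q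
      = ρ ^ q * (τ ^ (ρ - 1) * (((τ ^ ρ - a ^ ρ) / ρ) ^ p * (X - (τ ^ ρ - a ^ ρ) / ρ) ^ q)) := by
    intro τ hτ
    have hxτ : x ^ ρ - τ ^ ρ = ρ * (X - (τ ^ ρ - a ^ ρ) / ρ) := by
      rw [← hXdef]; field_simp; ring
    have hle : 0 ≤ X - (τ ^ ρ - a ^ ρ) / ρ := by
      rw [← hXdef, ← sub_div]
      exact div_nonneg (by linarith [Real.rpow_le_rpow (ha.trans hτ.1.le) hτ.2 hρ.le]) hρ.le
    rw [hxτ, Real.mul_rpow hρ.le hle]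
    ring
  rw [intervalIntegral.integral_congr_ae (Filter.Eventually.of_forall
      fun τ hτ => hkernel τ (by rwa [uIoc_of_le hax.le] at hτ)),
    intervalIntegral.integral_const_mul,
    integral_rpow_sub_one_mul_comp_rpow_sub_div hρ ha hax.le (fun u => u ^ p * (X - u) ^ q),
    hXdef, integral_rpow_mul_sub_rpow hp hq hX]

theorem genCaputoHigh_rpow_sub_div {α β x : ℝ} {n : ℕ} (hρ : 0 < ρ) (ha : 0 ≤ a)
    (hαn : α < n) (hβn : (n : ℝ) - 1 < β) (hx : a < x) :
    genCaputoHigh ρ α a n (fun t => ((t ^ ρ - a ^ ρ) / ρ) ^ β) x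
      = Real.Gamma (1 + β) / Real.Gamma (1 + β - α) * ((x ^ ρ - a ^ ρ) / ρ) ^ (β - α) := by
  have hintegral : ∫ τ in a..x, τ ^ (ρ - 1)
        * (gammaOp ρ)^[n] (fun t => ((t ^ ρ - a ^ ρ) / ρ) ^ β) τ * (x ^ ρ - τ ^ ρ) ^ ((n : ℝ) - α - 1)
      = (descPochhammer ℝ n).eval β * ∫ τ in a..x, τ ^ (ρ - 1)
        * ((τ ^ ρ - a ^ ρ) / ρ) ^ (β - n) * (x ^ ρ - τ ^ ρ) ^ ((n : ℝ) - α - 1) := by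
    rw [← intervalIntegral.integral_const_mul]
    refine intervalIntegral.integral_congr_ae (Filter.Eventually.of_forall fun τ hτ => ?_)
    rw [uIoc_of_le hx.le] at hτ
    rw [iterate_gammaOp_rpow_sub_div hρ ha n hτ.1]
    ring
  have hρpow : ρ ^ (α - n + 1) * ρ ^ ((n : ℝ) - α - 1) = 1 := by
    rw [← Real.rpow_add hρ, show α - n + 1 + (n - α - 1) = 0 by ring, Real.rpow_zero]
  have hΓ : Real.Gamma (n - α) ≠ 0 := (Real.Gamma_pos_of_pos (by linarith)).ne'
  have hpochhammer : (descPochhammer ℝ n).eval β * Real.Gamma (β - n + 1) = Real.Gamma (1 + β) := by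
    rw [sub_add_eq_add_sub, Real.descPochhammer_eval_mul_Gamma (by linarith), add_comm]
  rw [genCaputoHigh, hintegral, integral_rpow_sub_one_mul_rpow_sub_div_mul_rpow_sub hρ ha hx
    (by linarith) (by linarith), ← hpochhammer, show β - n + (n - α - 1) + 1 = β - α by ring,
    show (n : ℝ) - α - 1 + 1 = n - α by ring, show β - n + (n - α - 1) + 2 = 1 + β - α by ring]
  calc _ = (ρ ^ (α - n + 1) * ρ ^ ((n : ℝ) - α - 1))
        * ((descPochhammer ℝ n).eval β * Real.Gamma (β - n + 1)) / Real.Gamma (1 + β - α)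
        * ((x ^ ρ - a ^ ρ) / ρ) ^ (β - α) * (Real.Gamma (n - α) / Real.Gamma (n - α)) := by
        ring
    _ = _ := by rw [hρpow, div_self hΓ]; ring

end RpowSubDiv

theorem genCaputo_rpow_general (ρ a α β : ℝ) (n : ℕ)
    (hρ : 0 < ρ) (ha : 0 ≤ a)
    (hn : n = ⌊α⌋₊ + 1) (hβ : (n : ℝ) - 1 < β) :
    ∀ x : ℝ, a < x →
      genCaputoHigh ρ α a n (fun t => ((t ^ ρ - a ^ ρ) / ρ) ^ β) x
        = Real.Gamma (1 + β) / Real.Gamma (1 + β - α) *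
            ((x ^ ρ - a ^ ρ) / ρ) ^ (β - α) := by
  intro x hx
  have hαn : α < n := by
    rw [hn]
    push_cast
    exact Nat.lt_floor_add_one α
  exact genCaputoHigh_rpow_sub_div hρ ha hαn hβ hx

/-- Generalized Caputo derivative of power functions (Proposition 5.1, first identity). -/
theorem genCaputo_rpow (ρ a α β : ℝ) (n : ℕ)
    (hρ : 0 < ρ) (ha : 0 ≤ a) (hα : 0 < α) (hαnat : ∀ k : ℕ, α ≠ k)
    (hn : n = ⌊α⌋₊ + 1) (hβ : (n : ℝ) - 1 < β) :
    ∀ x : ℝ, a < x →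
      genCaputoHigh ρ α a n (fun t => ((t ^ ρ - a ^ ρ) / ρ) ^ β) x
        = Real.Gamma (1 + β) / Real.Gamma (1 + β - α) *
            ((x ^ ρ - a ^ ρ) / ρ) ^ (β - α) :=
  genCaputo_rpow_general ρ a α β n hρ ha hn hβ
end
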